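/- arXiv:1803.06567 — 3 statements merged into one kernel-verified Lean document; each statement's English description precedes it below -/
import Mathlib

section
/- Let f(x) = Σ_i c_i h_i(W_i x + b_i) where each h_i : ℝ → ℝ is differentiable with γ_i-Lipschitz derivative. Then the gradient ∇f(x) = W^T diag(c) h'(Wx + b) is Lipschitz continuous with constant L = σ_max(diag(c) W^T) · σ_max(diag(γ) W), where σ_max denotes the largest singular value. -/
open RealInnerProductSpace

/-- Largest singular value (operator 2-norm) of a matrix. -/
noncomputable def sigmaMax {m n : ℕ} (M : Matrix (Fin m) (Fin n) ℝ) : ℝ :=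
  ‖LinearMap.toContinuousLinearMap (Matrix.toEuclideanLin M)‖

/-!
By the chain rule the gradient of `x ↦ ∑ cᵢ hᵢ(⟪Wᵢ, x⟫ + bᵢ)` is `∑ cᵢ hᵢ'(⟪Wᵢ, x⟫ + bᵢ) Wᵢ`.
The difference of the gradients at `x` and `y` is `(diag(c) W)ᵀ Δ` with
`Δᵢ = hᵢ'(⟪Wᵢ, x⟫ + bᵢ) - hᵢ'(⟪Wᵢ, y⟫ + bᵢ)`, and the Lipschitz bound on `hᵢ'` gives
`|Δᵢ| ≤ |γᵢ ⟪Wᵢ, x - y⟫| = |(diag(γ) W (x - y))ᵢ|`. Hence `‖Δ‖ ≤ σ_max(diag(γ) W) ‖x - y‖`,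
and the operator bound for `(diag(c) W)ᵀ` finishes the estimate.
-/

section Ridge

variable {ι E : Type*} [Fintype ι] [NormedAddCommGroup E] [InnerProductSpace ℝ E]

theorem hasFDerivAt_comp_inner_add {g : ℝ → ℝ} {w x : E} {b : ℝ}
    (hg : DifferentiableAt ℝ g (⟪w, x⟫ + b)) :
    HasFDerivAt (fun y => g (⟪w, y⟫ + b)) (deriv g (⟪w, x⟫ + b) • innerSL ℝ w) x := by
  have hinner : HasFDerivAt (fun y => ⟪w, y⟫ + b) (innerSL ℝ w) x :=
    (innerSL ℝ w).hasFDerivAt.add_const b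
  refine (hg.hasDerivAt.comp_hasFDerivAt x hinner).congr_fderiv ?_
  ext v
  simp

theorem hasGradientAt_sum_mul_comp_inner_add [CompleteSpace E] (w : ι → E) (b c : ι → ℝ)
    {g : ι → ℝ → ℝ} {x : E} (hg : ∀ i, DifferentiableAt ℝ (g i) (⟪w i, x⟫ + b i)) :
    HasGradientAt (fun y => ∑ i, c i * g i (⟪w i, y⟫ + b i))
      (∑ i, (c i * deriv (g i) (⟪w i, x⟫ + b i)) • w i) x := by
  rw [hasGradientAt_iff_hasFDerivAt]
  refine (HasFDerivAt.fun_sum fun i _ => (hasFDerivAt_comp_inner_add (hg i)).const_mul (c i))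
    |>.congr_fderiv ?_
  ext v
  simp [InnerProductSpace.toDual_apply_apply, mul_assoc]

end Ridge

theorem EuclideanSpace.norm_le_norm_of_abs_le {ι : Type*} [Fintype ι]
    {u v : EuclideanSpace ℝ ι} (huv : ∀ i, |u i| ≤ |v i|) : ‖u‖ ≤ ‖v‖ := by
  simp only [EuclideanSpace.norm_eq, Real.norm_eq_abs]
  exact Real.sqrt_le_sqrt (Finset.sum_le_sum fun i _ => pow_le_pow_left₀ (abs_nonneg _) (huv i) 2)

theorem norm_toEuclideanLin_le_sigmaMax {m n : ℕ} (M : Matrix (Fin m) (Fin n) ℝ)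
    (v : EuclideanSpace ℝ (Fin n)) : ‖Matrix.toEuclideanLin M v‖ ≤ sigmaMax M * ‖v‖ :=
  (LinearMap.toContinuousLinearMap (Matrix.toEuclideanLin M)).le_opNorm v

section RowScaled

variable {m n : ℕ} (W : Fin m → EuclideanSpace ℝ (Fin n))

theorem toEuclideanLin_rowScaled_apply (γ : Fin m → ℝ) (x : EuclideanSpace ℝ (Fin n))
    (i : Fin m) :
    Matrix.toEuclideanLin (Matrix.of fun i j => γ i * W i j) x i = γ i * ⟪W i, x⟫ := by
  simp only [Matrix.toLpLin_apply, PiLp.toLp_apply, Matrix.mulVec, dotProduct, Matrix.of_apply,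
    PiLp.inner_apply, Finset.mul_sum]
  exact Finset.sum_congr rfl fun _ _ => by
    simp only [RCLike.inner_apply, Real.ringHom_apply]; ring

theorem toEuclideanLin_transpose_rowScaled (c : Fin m → ℝ) (v : EuclideanSpace ℝ (Fin m)) :
    Matrix.toEuclideanLin (Matrix.of fun i j => c i * W i j).transpose v =
      ∑ i, (c i * v i) • W i := by
  ext j
  simp [Matrix.toLpLin_apply, Matrix.mulVec, dotProduct, mul_assoc, mul_comm (W _ j)]

theorem norm_sum_smul_sub_sum_smul_le_sigmaMax (b c γ : Fin m → ℝ) (φ : Fin m → ℝ → ℝ)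
    (hφ : ∀ i s t, |φ i s - φ i t| ≤ γ i * |s - t|) (x y : EuclideanSpace ℝ (Fin n)) :
    ‖∑ i, (c i * φ i (⟪W i, x⟫ + b i)) • W i - ∑ i, (c i * φ i (⟪W i, y⟫ + b i)) • W i‖ ≤
      sigmaMax (Matrix.of fun i j => c i * W i j).transpose *
        sigmaMax (Matrix.of fun i j => γ i * W i j) * ‖x - y‖ := by
  set Δ : EuclideanSpace ℝ (Fin m) :=
    WithLp.toLp 2 fun i => φ i (⟪W i, x⟫ + b i) - φ i (⟪W i, y⟫ + b i)
  have hsub : ∑ i, (c i * φ i (⟪W i, x⟫ + b i)) • W i - ∑ i, (c i * φ i (⟪W i, y⟫ + b i)) • W i =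
      Matrix.toEuclideanLin (Matrix.of fun i j => c i * W i j).transpose Δ := by
    simp only [toEuclideanLin_transpose_rowScaled, ← Finset.sum_sub_distrib, ← sub_smul, Δ,
      mul_sub]
  have hΔ : ‖Δ‖ ≤ ‖Matrix.toEuclideanLin (Matrix.of fun i j => γ i * W i j) (x - y)‖ := by
    refine EuclideanSpace.norm_le_norm_of_abs_le fun i => ?_
    rw [toEuclideanLin_rowScaled_apply, abs_mul, inner_sub_right]
    calc |Δ i| ≤ γ i * |⟪W i, x⟫ - ⟪W i, y⟫| := by
          simpa [Δ] using hφ i (⟪W i, x⟫ + b i) (⟪W i, y⟫ + b i)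
      _ ≤ |γ i| * |⟪W i, x⟫ - ⟪W i, y⟫| := by gcongr; exact le_abs_self _
  rw [hsub, mul_assoc]
  refine (norm_toEuclideanLin_le_sigmaMax _ Δ).trans ?_
  exact mul_le_mul_of_nonneg_left (hΔ.trans (norm_toEuclideanLin_le_sigmaMax _ _)) (norm_nonneg _)

end RowScaled

theorem gradient_formula_and_lipschitz_general (m n : ℕ)
    (W : Fin m → EuclideanSpace ℝ (Fin n)) (b c γ : Fin m → ℝ)
    (h : Fin m → ℝ → ℝ) (hdiff : ∀ i, Differentiable ℝ (h i))
    (hlip : ∀ i, ∀ s t : ℝ, |deriv (h i) s - deriv (h i) t| ≤ γ i * |s - t|)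
    (f : EuclideanSpace ℝ (Fin n) → ℝ)
    (hf : f = fun x => ∑ i, c i * h i (⟪W i, x⟫ + b i))
    (L : ℝ)
    (hLdef : L = sigmaMax (Matrix.transpose (Matrix.of fun i j => c i * W i j)) *
        sigmaMax (Matrix.of fun i j => γ i * W i j)) :
    (∀ x : EuclideanSpace ℝ (Fin n),
      gradient f x = ∑ i, (c i * deriv (h i) (⟪W i, x⟫ + b i)) • W i) ∧
    (∀ x y : EuclideanSpace ℝ (Fin n),
      ‖gradient f x - gradient f y‖ ≤ L * ‖x - y‖) := by
  have hgrad : ∀ x, gradient f x = ∑ i, (c i * deriv (h i) (⟪W i, x⟫ + b i)) • W i := fun x =>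
    hf ▸ (hasGradientAt_sum_mul_comp_inner_add W b c fun i => (hdiff i).differentiableAt).gradient
  refine ⟨hgrad, fun x y => ?_⟩
  rw [hgrad, hgrad, hLdef]
  exact norm_sum_smul_sub_sum_smul_le_sigmaMax W b c γ (fun i => deriv (h i)) hlip x y

theorem gradient_formula_and_lipschitz (m n : ℕ)
    (W : Fin m → EuclideanSpace ℝ (Fin n)) (b c γ : Fin m → ℝ)
    (h : Fin m → ℝ → ℝ) (hdiff : ∀ i, Differentiable ℝ (h i))
    (hγ : ∀ i, 0 ≤ γ i)
    (hlip : ∀ i, ∀ s t : ℝ, |deriv (h i) s - deriv (h i) t| ≤ γ i * |s - t|)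
    (f : EuclideanSpace ℝ (Fin n) → ℝ)
    (hf : f = fun x => ∑ i, c i * h i (⟪W i, x⟫ + b i))
    (L : ℝ)
    (hLdef : L = sigmaMax (Matrix.transpose (Matrix.of fun i j => c i * W i j)) *
        sigmaMax (Matrix.of fun i j => γ i * W i j)) :
    (∀ x : EuclideanSpace ℝ (Fin n),
      gradient f x = ∑ i, (c i * deriv (h i) (⟪W i, x⟫ + b i)) • W i) ∧
    (∀ x y : EuclideanSpace ℝ (Fin n),
      ‖gradient f x - gradient f y‖ ≤ L * ‖x - y‖) :=
  gradient_formula_and_lipschitz_general m n W b c γ h hdiff hlip f hf L hLdef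
end

section
/- Let g : ℝ^n → ℝ be differentiable with L-Lipschitz gradient, x^nom ∈ ℝ^n, ν = ||∇g(x^nom)||_2 > 0, and 0 < ε < ν/(2L). Then the map T(x) = x^nom + ε ∇g(x)/||∇g(x)||_2 is well-defined and is a contraction on the closed ball B(x^nom, ε) with contraction factor εL/(ν − εL) < 1. -/
/-!
On the ball the gradient stays within `εL` of `∇g(xnom)`, so its norm is at least `m = ν - εL > 0`
and `T` sends the ball onto its boundary sphere. For unit-normalising nonzero vectors in an inner
product space one has the identity
`‖u - v‖² = ‖u‖‖v‖ ‖u/‖u‖ - v/‖v‖‖² + (‖u‖ - ‖v‖)²`,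
so normalisation is `1/m`-Lipschitz on vectors of norm at least `m`. Composing with the `L`-Lipschitz
gradient and scaling by `ε` gives the factor `εL/m`, which is below `1` because `εL < ν/2`.
-/

open Metric

section InnerProductSpace

variable {F : Type*} [NormedAddCommGroup F] [InnerProductSpace ℝ F]

theorem norm_sub_sq_eq_norm_mul_norm_mul_add (u v : F) :
    ‖u - v‖ ^ 2 = ‖u‖ * ‖v‖ * ‖‖u‖⁻¹ • u - ‖v‖⁻¹ • v‖ ^ 2 + (‖u‖ - ‖v‖) ^ 2 := by
  rcases eq_or_ne u 0 with rfl | hu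
  · simp
  rcases eq_or_ne v 0 with rfl | hv
  · simp
  have ha : ‖u‖ ≠ 0 := norm_ne_zero_iff.mpr hu
  have hb : ‖v‖ ≠ 0 := norm_ne_zero_iff.mpr hv
  rw [norm_sub_sq_real, norm_sub_sq_real, norm_smul, norm_smul, real_inner_smul_left,
    real_inner_smul_right, norm_inv, norm_norm, norm_inv, norm_norm]
  field_simp
  ring

theorem mul_norm_inv_norm_smul_sub_le {u v : F} {m : ℝ} (hm : 0 ≤ m) (hu : m ≤ ‖u‖)
    (hv : m ≤ ‖v‖) : m * ‖‖u‖⁻¹ • u - ‖v‖⁻¹ • v‖ ≤ ‖u - v‖ := by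
  refine le_of_sq_le_sq ?_ (norm_nonneg _)
  have hm2 : m ^ 2 ≤ ‖u‖ * ‖v‖ := by nlinarith
  calc (m * ‖‖u‖⁻¹ • u - ‖v‖⁻¹ • v‖) ^ 2
      = m ^ 2 * ‖‖u‖⁻¹ • u - ‖v‖⁻¹ • v‖ ^ 2 := by ring
    _ ≤ ‖u‖ * ‖v‖ * ‖‖u‖⁻¹ • u - ‖v‖⁻¹ • v‖ ^ 2 := by gcongr
    _ ≤ ‖u - v‖ ^ 2 := by
      rw [norm_sub_sq_eq_norm_mul_norm_mul_add u v]
      exact le_add_of_nonneg_right (sq_nonneg _)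

end InnerProductSpace

section NormedSpace

variable {F : Type*} [NormedAddCommGroup F] [NormedSpace ℝ F] {ε : ℝ}

theorem add_div_norm_smul_mem_sphere (c : F) {w : F} (hw : w ≠ 0) (hε : 0 ≤ ε) :
    c + (ε / ‖w‖) • w ∈ sphere c ε := by
  rw [mem_sphere, dist_eq_norm, add_sub_cancel_left, norm_smul, Real.norm_of_nonneg
    (div_nonneg hε (norm_nonneg w)), div_mul_cancel₀ _ (norm_ne_zero_iff.mpr hw)]

theorem norm_add_div_norm_smul_sub (c u v : F) (hε : 0 ≤ ε) :
    ‖(c + (ε / ‖u‖) • u) - (c + (ε / ‖v‖) • v)‖ = ε * ‖‖u‖⁻¹ • u - ‖v‖⁻¹ • v‖ := by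
  rw [add_sub_add_left_eq_sub, div_eq_mul_inv, div_eq_mul_inv, mul_smul, mul_smul, ← smul_sub,
    norm_smul, Real.norm_of_nonneg hε]

end NormedSpace

theorem norm_sub_mul_le_norm_of_mem_closedBall {E F : Type*} [SeminormedAddCommGroup E]
    [SeminormedAddCommGroup F] {f : E → F} {L ε : ℝ} {x₀ x : E} (hL : 0 ≤ L)
    (hf : ‖f x - f x₀‖ ≤ L * ‖x - x₀‖) (hx : x ∈ closedBall x₀ ε) :
    ‖f x₀‖ - ε * L ≤ ‖f x‖ := by
  rw [mem_closedBall, dist_eq_norm] at hx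
  have := norm_sub_norm_le (f x₀) (f x)
  rw [norm_sub_rev] at this
  nlinarith

theorem projected_gradient_map_contraction_general (n : ℕ)
    (g : EuclideanSpace ℝ (Fin n) → ℝ)
    (L : ℝ) (hL : 0 < L)
    (hlip : ∀ x y : EuclideanSpace ℝ (Fin n),
      ‖gradient g x - gradient g y‖ ≤ L * ‖x - y‖)
    (xnom : EuclideanSpace ℝ (Fin n)) (ν : ℝ) (hν : ν = ‖gradient g xnom‖)
    (ε : ℝ) (hε : 0 < ε) (hεsmall : ε < ν / (2 * L))
    (T : EuclideanSpace ℝ (Fin n) → EuclideanSpace ℝ (Fin n))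
    (hT : ∀ x, T x = xnom + (ε / ‖gradient g x‖) • gradient g x) :
    (∀ x ∈ Metric.closedBall xnom ε, gradient g x ≠ 0) ∧
    Set.MapsTo T (Metric.closedBall xnom ε) (Metric.closedBall xnom ε) ∧
    ε * L / (ν - ε * L) < 1 ∧
    (∀ x ∈ Metric.closedBall xnom ε, ∀ y ∈ Metric.closedBall xnom ε,
      ‖T x - T y‖ ≤ (ε * L / (ν - ε * L)) * ‖x - y‖) := by
  have hεL : ε * L < ν - ε * L := by
    have := (lt_div_iff₀ (by positivity)).mp hεsmall
    linarith
  have hm : 0 < ν - ε * L := (mul_pos hε hL).trans hεL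
  have hlow : ∀ x ∈ closedBall xnom ε, ν - ε * L ≤ ‖gradient g x‖ := fun x hx =>
    hν ▸ norm_sub_mul_le_norm_of_mem_closedBall hL.le (hlip x xnom) hx
  have hne : ∀ x ∈ closedBall xnom ε, gradient g x ≠ 0 := fun x hx =>
    norm_pos_iff.mp (hm.trans_le (hlow x hx))
  refine ⟨hne, fun x hx => ?_, (div_lt_one hm).mpr hεL, fun x hx y hy => ?_⟩
  · rw [hT]
    exact sphere_subset_closedBall (add_div_norm_smul_mem_sphere xnom (hne x hx) hε.le)
  · rw [hT, hT, norm_add_div_norm_smul_sub _ _ _ hε.le]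
    calc ε * ‖‖gradient g x‖⁻¹ • gradient g x - ‖gradient g y‖⁻¹ • gradient g y‖
        ≤ ε * (‖gradient g x - gradient g y‖ / (ν - ε * L)) := by
          gcongr
          rw [le_div_iff₀' hm]
          exact mul_norm_inv_norm_smul_sub_le hm.le (hlow x hx) (hlow y hy)
      _ ≤ ε * (L * ‖x - y‖ / (ν - ε * L)) := by gcongr; exact hlip x y
      _ = ε * L / (ν - ε * L) * ‖x - y‖ := by ring

theorem projected_gradient_map_contraction (n : ℕ)
    (g : EuclideanSpace ℝ (Fin n) → ℝ) (hg : Differentiable ℝ g)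
    (L : ℝ) (hL : 0 < L)
    (hlip : ∀ x y : EuclideanSpace ℝ (Fin n),
      ‖gradient g x - gradient g y‖ ≤ L * ‖x - y‖)
    (xnom : EuclideanSpace ℝ (Fin n)) (ν : ℝ) (hν : ν = ‖gradient g xnom‖)
    (hνpos : 0 < ν)
    (ε : ℝ) (hε : 0 < ε) (hεsmall : ε < ν / (2 * L))
    (T : EuclideanSpace ℝ (Fin n) → EuclideanSpace ℝ (Fin n))
    (hT : ∀ x, T x = xnom + (ε / ‖gradient g x‖) • gradient g x) :
    (∀ x ∈ Metric.closedBall xnom ε, gradient g x ≠ 0) ∧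
    Set.MapsTo T (Metric.closedBall xnom ε) (Metric.closedBall xnom ε) ∧
    ε * L / (ν - ε * L) < 1 ∧
    (∀ x ∈ Metric.closedBall xnom ε, ∀ y ∈ Metric.closedBall xnom ε,
      ‖T x - T y‖ ≤ (ε * L / (ν - ε * L)) * ‖x - y‖) :=
  projected_gradient_map_contraction_general n g L hL hlip xnom ν hν ε hε hεsmall T hT
end

section
/- Let g : ℝ^n → ℝ be differentiable with L-Lipschitz gradient, ν = ||∇g(x^nom)||_2, and 0 < ε < ν/(2L). Then g has a unique maximizer x* over the ball {x : ||x − x^nom||_2 ≤ ε}, this maximizer satisfies the fixed point equation x* = x^nom + ε ∇g(x*)/||∇g(x*)||_2, and the iteration x^{k+1} = T(x^k) starting from x^0 = x^nom satisfies ||x^k − x*||_2 ≤ ε (εL/(ν − εL))^k. -/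
/-!
On the ball `B = closedBall xⁿᵒᵐ ε` the gradient stays away from zero: `‖∇g z‖ ≥ m := ν - εL > εL`.
Since `‖a/‖a‖ - b/‖b‖‖ ≤ ‖a - b‖ / m` for `‖a‖, ‖b‖ ≥ m` in an inner product space, `T` maps `B`
into its boundary sphere and is a contraction with constant `εL/m < 1`; the Banach fixed point
theorem gives `x*` and the geometric rate. At `x*` the gradient is the outward normal
`(‖∇g x*‖/ε) • (x* - xⁿᵒᵐ)` of length more than `εL`, and the descent lemma
`g y ≤ g x* + ⟪∇g x*, y - x*⟫ + L/2 ‖y - x*‖²` together with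
`⟪x* - xⁿᵒᵐ, y - x*⟫ ≤ -‖y - x*‖²/2` for `y ∈ B` makes `x*` the strict maximizer of `g` on `B`.
-/

open Set Metric Function
open scoped RealInnerProductSpace NNReal

theorem LipschitzOnWith.exists_isFixedPt {α : Type*} [MetricSpace α] {f : α → α} {s : Set α}
    {K : ℝ≥0} (hsc : IsComplete s) (hs : s.Nonempty) (hsf : MapsTo f s s)
    (hf : LipschitzOnWith K f s) (hK : K < 1) : ∃ x ∈ s, IsFixedPt f x := by
  obtain ⟨x₀, hx₀⟩ := hs
  obtain ⟨x, hx, hfix, -⟩ := ContractingWith.exists_fixedPoint' hsc hsf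
    ⟨hK, hf.mapsToRestrict hsf⟩ hx₀ (edist_ne_top _ _)
  exact ⟨x, hx, hfix⟩

theorem LipschitzOnWith.dist_le_pow_mul_of_isFixedPt {α : Type*} [PseudoMetricSpace α]
    {f : α → α} {s : Set α} {K : ℝ≥0} (hf : LipschitzOnWith K f s) (hsf : MapsTo f s s)
    {x : ℕ → α} (hx₀ : x 0 ∈ s) (hx : ∀ k, x (k + 1) = f (x k)) {p : α} (hp : p ∈ s)
    (hfix : IsFixedPt f p) (k : ℕ) : dist (x k) p ≤ K ^ k * dist (x 0) p := by
  have hmem : ∀ k, x k ∈ s := fun k => by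
    induction k with
    | zero => exact hx₀
    | succ k ih => exact hx k ▸ hsf ih
  induction k with
  | zero => simp
  | succ k ih =>
    calc dist (x (k + 1)) p = dist (f (x k)) (f p) := by rw [hx, hfix.eq]
      _ ≤ K * dist (x k) p := hf.dist_le_mul _ (hmem k) _ hp
      _ ≤ K * (K ^ k * dist (x 0) p) := by gcongr
      _ = K ^ (k + 1) * dist (x 0) p := by ring

theorem isMaxOn_of_forall_ne_lt {α β : Type*} [Preorder β] {f : α → β} {s : Set α} {p : α}
    (h : ∀ y ∈ s, y ≠ p → f y < f p) : IsMaxOn f s p := fun y hy => by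
  rcases eq_or_ne y p with rfl | hne
  exacts [le_rfl, (h y hy hne).le]

theorem eq_of_isMaxOn_of_forall_ne_lt {α β : Type*} [Preorder β] {f : α → β} {s : Set α}
    {p y : α} (h : ∀ y ∈ s, y ≠ p → f y < f p) (hp : p ∈ s) (hy : y ∈ s)
    (hmax : IsMaxOn f s y) : y = p := by
  by_contra hne
  exact (h y hy hne).not_ge (hmax hp)

theorem LipschitzWith.norm_sub_mul_le_of_mem_closedBall {E F : Type*} [PseudoMetricSpace E]
    [SeminormedAddCommGroup F] {G : E → F} {K : ℝ≥0} (hG : LipschitzWith K G) {c z : E} {r : ℝ}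
    (hz : z ∈ closedBall c r) : ‖G c‖ - K * r ≤ ‖G z‖ := by
  have hcz : ‖G c - G z‖ ≤ K * r := by
    rw [← dist_eq_norm]
    exact (hG.dist_le_mul c z).trans (by gcongr; exact mem_closedBall'.mp hz)
  linarith [norm_sub_norm_le (G c) (G z)]

variable {E : Type*} [NormedAddCommGroup E] [InnerProductSpace ℝ E]

theorem mul_norm_inv_smul_sub_inv_smul_le {a b : E} {m : ℝ} (hm : 0 ≤ m) (ha : m ≤ ‖a‖)
    (hb : m ≤ ‖b‖) : m * ‖‖a‖⁻¹ • a - ‖b‖⁻¹ • b‖ ≤ ‖a - b‖ := by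
  rcases hm.eq_or_lt with rfl | hm
  · simp
  have hA : 0 < ‖a‖ := hm.trans_le ha
  have hB : 0 < ‖b‖ := hm.trans_le hb
  -- `‖a - b‖² - ‖a‖ ‖b‖ ‖a/‖a‖ - b/‖b‖‖² = (‖a‖ - ‖b‖)²`
  have hsq : ‖‖a‖⁻¹ • a - ‖b‖⁻¹ • b‖ ^ 2 * (‖a‖ * ‖b‖) = 2 * (‖a‖ * ‖b‖) - 2 * ⟪a, b⟫ := by
    rw [norm_sub_sq_real, real_inner_smul_left, real_inner_smul_right, norm_smul, norm_smul,
      norm_inv, norm_norm, norm_inv, norm_norm]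
    field_simp
    ring
  have hab := norm_sub_sq_real a b
  rw [← pow_le_pow_iff_left₀ (by positivity) (norm_nonneg _) two_ne_zero]
  nlinarith [sq_nonneg ‖‖a‖⁻¹ • a - ‖b‖⁻¹ • b‖, mul_le_mul ha hb hm.le hA.le, sq_nonneg (‖a‖ - ‖b‖)]

theorem inner_sub_le_neg_half_sq {u w : E} (h : ‖w‖ ≤ ‖u‖) :
    ⟪u, w - u⟫ ≤ -(‖w - u‖ ^ 2 / 2) := by
  have := norm_sub_sq_real w u
  rw [inner_sub_right, real_inner_self_eq_norm_sq, real_inner_comm]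
  nlinarith [norm_nonneg w]

/-- The map `T` of the iteration is `sphereStep xⁿᵒᵐ ε ∇g`. -/
noncomputable def sphereStep (c : E) (ε : ℝ) (G : E → E) (z : E) : E := c + (ε / ‖G z‖) • G z

variable {c : E} {ε : ℝ} {G : E → E}

theorem sphereStep_sub_center (z : E) : sphereStep c ε G z - c = (ε / ‖G z‖) • G z :=
  add_sub_cancel_left c _

theorem norm_sphereStep_sub_center (hε : 0 ≤ ε) {z : E} (hz : G z ≠ 0) :
    ‖sphereStep c ε G z - c‖ = ε := by
  rw [sphereStep_sub_center, norm_smul, Real.norm_of_nonneg (by positivity),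
    div_mul_cancel₀ _ (norm_ne_zero_iff.mpr hz)]

theorem apply_eq_smul_sub_center_of_isFixedPt (hε : ε ≠ 0) {p : E} (hp : G p ≠ 0)
    (hfix : IsFixedPt (sphereStep c ε G) p) : G p = (‖G p‖ / ε) • (p - c) := by
  have hpc : p - c = (ε / ‖G p‖) • G p := by rw [← sphereStep_sub_center, hfix.eq]
  rw [hpc, smul_smul, div_mul_div_cancel₀ hε, div_self (norm_ne_zero_iff.mpr hp), one_smul]

theorem mul_dist_sphereStep_le (hε : 0 ≤ ε) {K : ℝ≥0} (hG : LipschitzWith K G) {m : ℝ}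
    (hm : 0 ≤ m) {z w : E} (hz : m ≤ ‖G z‖) (hw : m ≤ ‖G w‖) :
    m * dist (sphereStep c ε G z) (sphereStep c ε G w) ≤ ε * K * dist z w := by
  have hdiff : sphereStep c ε G z - sphereStep c ε G w = ε • (‖G z‖⁻¹ • G z - ‖G w‖⁻¹ • G w) := by
    simp only [sphereStep, div_eq_mul_inv, mul_smul, smul_sub]
    abel
  calc m * dist (sphereStep c ε G z) (sphereStep c ε G w)
      = ε * (m * ‖‖G z‖⁻¹ • G z - ‖G w‖⁻¹ • G w‖) := by
        rw [dist_eq_norm, hdiff, norm_smul, Real.norm_of_nonneg hε]; ring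
    _ ≤ ε * (K * ‖z - w‖) :=
        mul_le_mul_of_nonneg_left
          ((mul_norm_inv_smul_sub_inv_smul_le hm hz hw).trans (hG.norm_sub_le z w)) hε
    _ = ε * K * dist z w := by rw [dist_eq_norm]; ring


theorem mapsTo_sphereStep (hε : 0 ≤ ε) (hG0 : ∀ z ∈ closedBall c ε, G z ≠ 0) :
    MapsTo (sphereStep c ε G) (closedBall c ε) (closedBall c ε) := fun z hz =>
  mem_closedBall_iff_norm.mpr (norm_sphereStep_sub_center hε (hG0 z hz)).le

theorem lipschitzOnWith_sphereStep (hε : 0 ≤ ε) {K : ℝ≥0} (hG : LipschitzWith K G) {m : ℝ}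
    (hm : 0 < m) (hGm : ∀ z ∈ closedBall c ε, m ≤ ‖G z‖) :
    LipschitzOnWith (ε * K / m).toNNReal (sphereStep c ε G) (closedBall c ε) :=
  LipschitzOnWith.of_dist_le_mul fun z hz w hw => by
    rw [Real.coe_toNNReal _ (by positivity), div_mul_eq_mul_div, le_div_iff₀ hm, mul_comm]
    exact mul_dist_sphereStep_le hε hG hm.le (hGm z hz) (hGm w hw)

variable [CompleteSpace E]

theorem exists_isFixedPt_sphereStep_of_iterate {K : ℝ≥0} (hG : LipschitzWith K G) (hε : 0 < ε)
    {m : ℝ} (hεK : ε * K < m) (hGm : ∀ z ∈ closedBall c ε, m ≤ ‖G z‖) {x : ℕ → E}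
    (hx₀ : x 0 = c) (hx : ∀ k, x (k + 1) = sphereStep c ε G (x k)) :
    ∃ p ∈ closedBall c ε, IsFixedPt (sphereStep c ε G) p ∧
      ∀ k, ‖x k - p‖ ≤ ε * (ε * K / m) ^ k := by
  have hm : 0 < m := (by positivity : (0 : ℝ) ≤ ε * K).trans_lt hεK
  have hq : 0 ≤ ε * K / m := by positivity
  have hG0 : ∀ z ∈ closedBall c ε, G z ≠ 0 := fun z hz =>
    norm_pos_iff.mp (hm.trans_le (hGm z hz))
  have hmaps := mapsTo_sphereStep hε.le hG0
  have hcontr := lipschitzOnWith_sphereStep hε.le hG hm hGm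
  obtain ⟨p, hp, hfix⟩ := hcontr.exists_isFixedPt isClosed_closedBall.isComplete
    (nonempty_closedBall.mpr hε.le) hmaps
    (by rwa [← NNReal.coe_lt_coe, Real.coe_toNNReal _ hq, NNReal.coe_one, div_lt_one hm])
  refine ⟨p, hp, hfix, fun k => ?_⟩
  have hpc : ‖p - c‖ = ε := hfix.eq ▸ norm_sphereStep_sub_center hε.le (hG0 p hp)
  have := hcontr.dist_le_pow_mul_of_isFixedPt hmaps (hx₀ ▸ mem_closedBall_self hε.le) hx hp hfix k
  rwa [hx₀, dist_comm c, dist_eq_norm, dist_eq_norm, hpc, Real.coe_toNNReal _ hq, mul_comm] at this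

theorem hasDerivAt_apply_add_smul {g : E → ℝ} (hg : Differentiable ℝ g) (x v : E) (t : ℝ) :
    HasDerivAt (fun t : ℝ => g (x + t • v)) ⟪gradient g (x + t • v), v⟫ t := by
  have hline : HasDerivAt (fun t : ℝ => x + t • v) v t := by
    simpa using ((hasDerivAt_id t).smul_const v).const_add x
  simpa [Function.comp_def, inner_gradient_left] using (hg _).hasFDerivAt.comp_hasDerivAt t hline

theorem le_add_inner_gradient_add_sq {g : E → ℝ} {K : ℝ≥0} (hg : Differentiable ℝ g)
    (hK : LipschitzWith K (gradient g)) (x y : E) :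
    g y ≤ g x + ⟪gradient g x, y - x⟫ + K / 2 * ‖y - x‖ ^ 2 := by
  set v := y - x
  set φ : ℝ → ℝ := fun t => g (x + t • v) - t * ⟪gradient g x, v⟫ - K / 2 * ‖v‖ ^ 2 * t ^ 2
  have hφ : ∀ t, HasDerivAt φ (⟪gradient g (x + t • v) - gradient g x, v⟫ - K * ‖v‖ ^ 2 * t) t := by
    intro t
    have h := ((hasDerivAt_apply_add_smul hg x v t).sub ((hasDerivAt_id' t).mul_const
      ⟪gradient g x, v⟫)).sub (((hasDerivAt_id' t).pow 2).const_mul (K / 2 * ‖v‖ ^ 2))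
    refine h.congr_deriv ?_
    simp only [inner_sub_left, Nat.cast_ofNat]
    ring
  have hφ' : ∀ t, 0 ≤ t → ⟪gradient g (x + t • v) - gradient g x, v⟫ - K * ‖v‖ ^ 2 * t ≤ 0 := by
    intro t ht
    have : ⟪gradient g (x + t • v) - gradient g x, v⟫ ≤ K * ‖v‖ ^ 2 * t :=
      calc ⟪gradient g (x + t • v) - gradient g x, v⟫
          ≤ ‖gradient g (x + t • v) - gradient g x‖ * ‖v‖ := real_inner_le_norm _ _
        _ ≤ K * ‖t • v‖ * ‖v‖ := by gcongr; simpa using hK.norm_sub_le (x + t • v) x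
        _ = K * ‖v‖ ^ 2 * t := by rw [norm_smul, Real.norm_of_nonneg ht]; ring
    linarith
  have hanti : AntitoneOn φ (Icc 0 1) :=
    antitoneOn_of_hasDerivWithinAt_nonpos (convex_Icc 0 1)
      (fun t _ => (hφ t).continuousAt.continuousWithinAt) (fun t _ => (hφ t).hasDerivWithinAt)
      (fun t ht => hφ' t (interior_subset ht).1)
  have := hanti (left_mem_Icc.2 zero_le_one) (right_mem_Icc.2 zero_le_one) zero_le_one
  simp only [φ, v, zero_smul, one_smul, add_zero, add_sub_cancel] at this
  linarith

theorem apply_lt_of_gradient_eq_smul_sub_center {g : E → ℝ} {K : ℝ≥0} (hg : Differentiable ℝ g)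
    (hK : LipschitzWith K (gradient g)) {c p y : E} {ε μ : ℝ} (hp : ‖p - c‖ = ε)
    (hgrad : gradient g p = μ • (p - c)) (hμ : K < μ) (hy : y ∈ closedBall c ε) (hne : y ≠ p) :
    g y < g p := by
  have hinner : ⟪p - c, y - p⟫ ≤ -(‖y - p‖ ^ 2 / 2) := by
    have := inner_sub_le_neg_half_sq (u := p - c) (w := y - c) (by rwa [hp, ← dist_eq_norm])
    rwa [sub_sub_sub_cancel_right] at this
  have hpos : 0 < ‖y - p‖ ^ 2 := pow_pos (norm_pos_iff.mpr (sub_ne_zero.mpr hne)) 2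
  have hK0 : (0 : ℝ) ≤ K := K.2
  have := le_add_inner_gradient_add_sq hg hK p y
  rw [hgrad, real_inner_smul_left] at this
  nlinarith

theorem verification_iteration_converges (n : ℕ)
    (g : EuclideanSpace ℝ (Fin n) → ℝ) (hg : Differentiable ℝ g)
    (L : ℝ) (hL : 0 < L)
    (hlip : ∀ x y : EuclideanSpace ℝ (Fin n),
      ‖gradient g x - gradient g y‖ ≤ L * ‖x - y‖)
    (xnom : EuclideanSpace ℝ (Fin n)) (ν : ℝ) (hν : ν = ‖gradient g xnom‖)
    (ε : ℝ) (hε : 0 < ε) (hεsmall : ε < ν / (2 * L))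
    (T : EuclideanSpace ℝ (Fin n) → EuclideanSpace ℝ (Fin n))
    (hT : ∀ x, T x = xnom + (ε / ‖gradient g x‖) • gradient g x)
    (x : ℕ → EuclideanSpace ℝ (Fin n)) (hx0 : x 0 = xnom)
    (hxk : ∀ k, x (k + 1) = T (x k)) :
    ∃ xstar ∈ Metric.closedBall xnom ε,
      IsMaxOn g (Metric.closedBall xnom ε) xstar ∧
      (∀ y ∈ Metric.closedBall xnom ε, IsMaxOn g (Metric.closedBall xnom ε) y → y = xstar) ∧
      xstar = xnom + (ε / ‖gradient g xstar‖) • gradient g xstar ∧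
      (∀ k : ℕ, ‖x k - xstar‖ ≤ ε * (ε * L / (ν - ε * L)) ^ k) := by
  obtain rfl : T = sphereStep xnom ε (gradient g) := funext hT
  set K : ℝ≥0 := ⟨L, hL.le⟩
  have hKL : (K : ℝ) = L := rfl
  have hK : LipschitzWith K (gradient g) :=
    LipschitzWith.of_dist_le_mul fun y z => by rw [dist_eq_norm, dist_eq_norm]; exact hlip y z
  have hεL : ε * L < ν - ε * L := by
    rw [lt_div_iff₀ (by positivity)] at hεsmall
    linarith
  have hgrad : ∀ z ∈ closedBall xnom ε, ν - ε * L ≤ ‖gradient g z‖ := fun z hz => by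
    have := hK.norm_sub_mul_le_of_mem_closedBall hz
    rw [hKL, ← hν] at this
    linarith
  obtain ⟨p, hpB, hfix, hconv⟩ := exists_isFixedPt_sphereStep_of_iterate hK hε hεL hgrad hx0 hxk
  have hgrad0 : gradient g p ≠ 0 := by
    rw [← norm_pos_iff]
    linarith [hgrad p hpB, mul_pos hε hL]
  have hstrict : ∀ y ∈ closedBall xnom ε, y ≠ p → g y < g p := fun y hy hne =>
    apply_lt_of_gradient_eq_smul_sub_center hg hK
      (hfix.eq ▸ norm_sphereStep_sub_center hε.le hgrad0)
      (apply_eq_smul_sub_center_of_isFixedPt hε.ne' hgrad0 hfix)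
      ((lt_div_iff₀ hε).mpr (by rw [hKL]; linarith [hgrad p hpB])) hy hne
  exact ⟨p, hpB, isMaxOn_of_forall_ne_lt hstrict,
    fun y hy hmax => eq_of_isMaxOn_of_forall_ne_lt hstrict hpB hy hmax, hfix.symm, hconv⟩
end
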